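/- For every n ≥ 0 and every A with 0 ≤ A ≤ ⌊n²/4⌋, there exists exactly one Motzkin path mz of width n and area A with the following property: for every i with 0 ≤ i ≤ n, the area under the first i moves of mz is maximal among the areas under the first i moves of all Motzkin paths of width n and area A (this mz is called the canonic path for n and A). In particular, for every A with 0 ≤ A ≤ ⌊n²/4⌋, the set MZ(n,A) of Motzkin paths of width n and area A is nonempty. -/

import Mathlib

/-- Moves of a Motzkin path: Up-right, Horizontal-right, Down-right. -/
inductive Move : Type
  | U : Move
  | H : Move
  | D : Move
deriving DecidableEq

open Move

/-- The vertical step of a move. -/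
def Move.step : Move → ℤ
  | U => 1
  | H => 0
  | D => -1

/-- The height of a path after its first `i` moves. -/
def heightAt (mz : List Move) (i : ℕ) : ℤ :=
  ((mz.take i).map Move.step).sum

/-- A word over {U,H,D} is a Motzkin path if it never goes below the x-axis
and ends on the x-axis. -/
def IsMotzkin (mz : List Move) : Prop :=
  (∀ i, 0 ≤ heightAt mz i) ∧ heightAt mz mz.length = 0

/-- The area between the x-axis and the path (sum of heights at integer points). -/
def area (mz : List Move) : ℤ :=
  ∑ i ∈ Finset.range (mz.length + 1), heightAt mz i

/-- `MZ n A` is the set of Motzkin paths of width `n` and area `A`. -/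
def MZ (n A : ℕ) : Set (List Move) :=
  {mz | mz.length = n ∧ IsMotzkin mz ∧ area mz = A}

/-- The weight `ω_i` of the `i`-th move (0-indexed): it is `h_i` for U and D moves
(height after the move for U, before the move for D) and `2h_i + 1` for H moves. -/
def moveWeight (mz : List Move) (i : ℕ) : ℤ :=
  match mz[i]? with
  | some U => heightAt mz (i + 1)
  | some D => heightAt mz i
  | some H => 2 * heightAt mz i + 1
  | none => 1

/-- The weight `ω(mz)` of a Motzkin path. -/
def weight (mz : List Move) : ℤ :=
  ∏ i ∈ Finset.range mz.length, moveWeight mz i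

/-- The total displacement `D(π) = Σ_i |i - π(i)|` of a permutation. -/
def totalDisp {n : ℕ} (π : Equiv.Perm (Fin n)) : ℤ :=
  ∑ i : Fin n, |((π i : ℕ) : ℤ) - ((i : ℕ) : ℤ)|

/-- The word over {U,H,D} associated to a permutation. -/
def toPath {n : ℕ} (π : Equiv.Perm (Fin n)) : List Move :=
  (List.finRange n).map fun i : Fin n =>
    if (i : ℕ) < (π i : ℕ) ∧ (i : ℕ) < (π.symm i : ℕ) then U
    else if (π i : ℕ) < (i : ℕ) ∧ (π.symm i : ℕ) < (i : ℕ) then D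
    else H

/-- The last fall length: the length of the maximal suffix consisting of D moves. -/
def lastFall (mz : List Move) : ℕ :=
  (mz.reverse.takeWhile (fun m => decide (m = D))).length

/-- The maximum height of a path. -/
def maxHeight (mz : List Move) : ℕ :=
  (Finset.range (mz.length + 1)).sup fun i => (heightAt mz i).toNat

/-- `flatsAt mz k` is the number of H moves of `mz` made at height `k`. -/
def flatsAt (mz : List Move) (k : ℕ) : ℕ :=
  ((Finset.range mz.length).filter fun j => mz[j]? = some H ∧ heightAt mz j = (k : ℤ)).card

/-- `peaksAt mz k` is the number of U moves of `mz` ending at height `k`. -/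
def peaksAt (mz : List Move) (k : ℕ) : ℕ :=
  ((Finset.range mz.length).filter fun j => mz[j]? = some U ∧ heightAt mz (j + 1) = (k : ℤ)).card

/-- `downsAt mz k` is the number of D moves of `mz` starting at height `k`. -/
def downsAt (mz : List Move) (k : ℕ) : ℕ :=
  ((Finset.range mz.length).filter fun j => mz[j]? = some D ∧ heightAt mz j = (k : ℤ)).card

/-- A candidate building sequence `(f_0, p_1, f_1, …, p_h, f_h)`, recorded as its
height `h` together with the flat counts `f` and peak counts `p`. -/
structure BSeq where
  h : ℕ
  f : ℕ → ℕ
  p : ℕ → ℕ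

/-- `Sset n A` is the set of building sequences for width `n` and area `A`:
all `p`-entries `p_1, …, p_h` are positive, entries beyond the height are zero, and the
width and area conditions hold. -/
def Sset (n A : ℕ) : Set BSeq :=
  {a | (∀ i, 1 ≤ i → i ≤ a.h → 0 < a.p i) ∧
       a.p 0 = 0 ∧
       (∀ i, a.h < i → a.p i = 0) ∧
       (∀ i, a.h < i → a.f i = 0) ∧
       (∑ i ∈ Finset.range (a.h + 1), a.f i) + 2 * (∑ i ∈ Finset.Icc 1 a.h, a.p i) = n ∧
       (∑ i ∈ Finset.range (a.h + 1), i * a.f i) +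
         (∑ i ∈ Finset.Icc 1 a.h, (2 * i - 1) * a.p i) = A}

/-- `mz` has building sequence `a`. -/
def hasBuildSeq (mz : List Move) (a : BSeq) : Prop :=
  maxHeight mz = a.h ∧ (∀ i, flatsAt mz i = a.f i) ∧ (∀ i, peaksAt mz i = a.p i)

/-- `perm(a) = ∏_{i=0}^h (2i+1)^{f_i} · ∏_{i=1}^h i^{2p_i}`. -/
def permWeight (a : BSeq) : ℕ :=
  (∏ i ∈ Finset.range (a.h + 1), (2 * i + 1) ^ a.f i) *
    ∏ i ∈ Finset.Icc 1 a.h, i ^ (2 * a.p i)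

/-- `m(a)`, the number of Motzkin paths with building sequence `a`. -/
def mcount (a : BSeq) : ℕ :=
  Nat.choose (a.f a.h + a.p a.h - 1) (a.p a.h - 1) *
    (∏ i ∈ Finset.Icc 1 (a.h - 1),
      Nat.choose (a.p (i + 1) + a.f i) (a.f i) *
        Nat.choose (a.p (i + 1) + a.f i + a.p i - 1) (a.p i - 1)) *
    Nat.choose (a.p 1 + a.f 0) (a.f 0)

/-- `M(n,A,l)`: the number of Motzkin paths of width `n`, area `A` and last fall length `l`
(for negative arguments there are no such paths, so the value is `0`; the value at
`(0,0,0)` is `1`, counting the empty path). -/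
noncomputable def Mcount (n A l : ℤ) : ℕ :=
  Nat.card {mz : List Move // (mz.length : ℤ) = n ∧ IsMotzkin mz ∧ area mz = A ∧
    (lastFall mz : ℤ) = l}

/-- `D(n,d,l)`: the sum of the weights of all Motzkin paths of width `n`, area `d` and
last fall length `l`. -/
noncomputable def Dw (n d l : ℤ) : ℤ :=
  ∑ᶠ mz ∈ {mz : List Move | (mz.length : ℤ) = n ∧ IsMotzkin mz ∧ area mz = d ∧
    (lastFall mz : ℤ) = l}, weight mz

/-- `M(n,A,h,p)`: the number of Motzkin paths of width `n`, area `A`, maximum height `h`,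
with exactly `p` U-moves ending at height `h` and no H-moves at height `h`. -/
noncomputable def Mtop (n A h p : ℤ) : ℕ :=
  Nat.card {mz : List Move // (mz.length : ℤ) = n ∧ IsMotzkin mz ∧ area mz = A ∧
    (maxHeight mz : ℤ) = h ∧ (peaksAt mz h.toNat : ℤ) = p ∧ flatsAt mz h.toNat = 0}

/-- `D(n,d,h,p)`: the sum of weights of Motzkin paths of width `n`, area `d`,
maximum height `h`, with exactly `p` U-moves ending at height `h` and no H-moves at height `h`. -/
noncomputable def Dtop (n d h p : ℤ) : ℤ :=
  ∑ᶠ mz ∈ {mz : List Move | (mz.length : ℤ) = n ∧ IsMotzkin mz ∧ area mz = d ∧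
    (maxHeight mz : ℤ) = h ∧ (peaksAt mz h.toNat : ℤ) = p ∧ flatsAt mz h.toNat = 0}, weight mz

/-- The area under the first `i` moves of a path (trapezoid rule; may be a half-integer). -/
def prefixArea (mz : List Move) (i : ℕ) : ℚ :=
  ∑ j ∈ Finset.range i, ((heightAt mz j : ℚ) + (heightAt mz (j + 1) : ℚ)) / 2
/-
Write `A = ⌊(w-1)²/4⌋ + t` with `w ≤ n` and `t ≤ ⌊w/2⌋`. The canonic path is the tent of width
`w - 1` with its last `t` descending positions raised by one, so its heights satisfy
`min(j, w-1-j) ≤ c j ≤ max(0, w-j)`. Let `g` be the heights of a path in `MZ(n,A)` and `i ≤ n`.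
If `g i + i < w`, unit steps force `g j ≤ min(j, w-1-j) ≤ c j` for all `j ≤ i`. Otherwise `g` still
has to come down from `g i ≥ w - i`, which costs it a tail area of at least
`g i (g i - 1)/2 ≥ (w-i)(w-i-1)/2`, the most the tail of `c` can have; as the total areas agree,
the prefix sums of `g` are again at most those of `c`. Prefix areas determine the heights, whence
uniqueness.
-/

open Finset

lemma mul_sub_one_le_mul_sub_one {a b : ℤ} (ha : 0 ≤ a) (hab : a ≤ b) :
    a * (a - 1) ≤ b * (b - 1) := by
  rcases lt_or_ge (a + b) 1 with h | h
  · obtain rfl : a = b := by omega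
    rfl
  · nlinarith [mul_nonneg (sub_nonneg.2 hab) (by omega : (0 : ℤ) ≤ b + a - 1)]

section HeightFunction

variable {f : ℕ → ℤ}

lemma abs_sub_le_of_abs_succ_sub_le_one (hf : ∀ j, |f (j + 1) - f j| ≤ 1) {i j : ℕ}
    (hij : i ≤ j) : |f j - f i| ≤ j - i := by
  induction j, hij using Nat.le_induction with
  | base => simp
  | succ j hij ih =>
    calc |f (j + 1) - f i| ≤ |f (j + 1) - f j| + |f j - f i| := abs_sub_le _ _ _
      _ ≤ 1 + (j - i) := add_le_add (hf j) ih
      _ = ((j + 1 : ℕ) : ℤ) - i := by push_cast; ring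

lemma mul_sub_one_le_two_mul_sum_Ico_add (hf : ∀ j, f j ≤ f (j + 1) + 1)
    (hpos : ∀ j, 0 ≤ f j) {i n : ℕ} (hin : i ≤ n) :
    f i * (f i - 1) ≤ 2 * ∑ j ∈ Ico (i + 1) (n + 1), f j + f n * (f n - 1) := by
  induction n, hin using Nat.le_induction with
  | base => simp
  | succ n hin ih =>
    rw [sum_Ico_succ_top (by omega : i + 1 ≤ n + 1)]
    have hstep := mul_sub_one_le_mul_sub_one (hpos n) (hf n)
    linarith

end HeightFunction

lemma two_mul_sum_Ico_max_zero_sub_le (w : ℤ) {i n : ℕ} (hin : i ≤ n) :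
    2 * ∑ j ∈ Ico (i + 1) (n + 1), max 0 (w - j) ≤ max 0 (w - i) * (max 0 (w - i) - 1) := by
  suffices h : 2 * ∑ j ∈ Ico (i + 1) (n + 1), max 0 (w - j)
      + max 0 (w - n) * (max 0 (w - n) - 1) ≤ max 0 (w - i) * (max 0 (w - i) - 1) by
    linarith [mul_sub_one_le_mul_sub_one le_rfl (le_max_left 0 (w - n))]
  induction n, hin using Nat.le_induction with
  | base => simp
  | succ n hin ih =>
    rw [sum_Ico_succ_top (by omega : i + 1 ≤ n + 1)]
    have hstep : max 0 (w - (n + 1 : ℕ)) * (max 0 (w - (n + 1 : ℕ)) + 1)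
        ≤ max 0 (w - n) * (max 0 (w - n) - 1) := by
      push_cast
      rcases le_or_gt (w - n) 0 with hw | hw
      · simp [max_eq_left hw, max_eq_left (by omega : w - (n + 1) ≤ 0)]
      · rw [max_eq_right hw.le, max_eq_right (by omega : 0 ≤ w - (n + 1))]
        exact le_of_eq (by ring)
    linarith

lemma sum_range_le_of_tent_bounds {g c : ℕ → ℤ} {w : ℤ} {n m : ℕ}
    (hg0 : g 0 = 0) (hg : ∀ j, |g (j + 1) - g j| ≤ 1) (hg_nonneg : ∀ j, 0 ≤ g j)
    (hgn : g n = 0) (hlow : ∀ j : ℕ, min (j : ℤ) (w - 1 - j) ≤ c j)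
    (hup : ∀ j : ℕ, c j ≤ max 0 (w - j))
    (hsum : ∑ j ∈ range (n + 1), g j = ∑ j ∈ range (n + 1), c j) (hm : m ≤ n + 1) :
    ∑ j ∈ range m, g j ≤ ∑ j ∈ range m, c j := by
  obtain _ | i := m
  · simp
  by_cases hgi : g i + i < w
  · refine sum_le_sum fun j hj => le_trans (le_min ?_ ?_) (hlow j)
    · have := abs_sub_le_of_abs_succ_sub_le_one hg (Nat.zero_le j)
      rw [hg0, abs_le] at this
      push_cast at this
      linarith
    · have := abs_sub_le_of_abs_succ_sub_le_one hg (Nat.lt_succ_iff.mp (mem_range.mp hj))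
      rw [abs_le] at this
      linarith
  · have hsplit := fun f : ℕ → ℤ => sum_range_add_sum_Ico f (by omega : i + 1 ≤ n + 1)
    have htail_g := mul_sub_one_le_two_mul_sum_Ico_add
      (fun j => by linarith [(abs_le.mp (hg j)).1]) hg_nonneg (by omega : i ≤ n)
    have htail_c : 2 * ∑ j ∈ Ico (i + 1) (n + 1), c j ≤ max 0 (w - i) * (max 0 (w - i) - 1) :=
      le_trans (by gcongr with j; exact hup j) (two_mul_sum_Ico_max_zero_sub_le w (by omega))
    have hdescent := mul_sub_one_le_mul_sub_one (le_max_left 0 (w - i))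
      (max_le (hg_nonneg i) (by omega))
    rw [← hsplit g, ← hsplit c] at hsum
    rw [hgn] at htail_g
    linarith

lemma Move.step_injective : Function.Injective Move.step := by
  intro a b h
  cases a <;> cases b <;> simp_all [Move.step]

lemma heightAt_zero (mz : List Move) : heightAt mz 0 = 0 := rfl

lemma heightAt_succ (mz : List Move) {i : ℕ} (hi : i < mz.length) :
    heightAt mz (i + 1) = heightAt mz i + mz[i].step := by
  rw [heightAt, heightAt, List.take_add_one, List.getElem?_eq_getElem hi, List.map_append,
    List.sum_append]
  simp

lemma heightAt_of_length_le (mz : List Move) {i : ℕ} (hi : mz.length ≤ i) :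
    heightAt mz i = heightAt mz mz.length := by
  simp [heightAt, List.take_of_length_le hi]

lemma abs_heightAt_succ_sub_le_one (mz : List Move) (i : ℕ) :
    |heightAt mz (i + 1) - heightAt mz i| ≤ 1 := by
  rcases lt_or_ge i mz.length with hi | hi
  · rw [heightAt_succ mz hi, add_sub_cancel_left]
    cases mz[i] <;> simp [Move.step]
  · rw [heightAt_of_length_le mz hi, heightAt_of_length_le mz (by omega)]
    simp

lemma heightAt_eq_of_prefixArea_eq {mz mz' : List Move} {n : ℕ}
    (h : ∀ i ≤ n, prefixArea mz i = prefixArea mz' i) :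
    ∀ i ≤ n, heightAt mz i = heightAt mz' i := by
  intro i hi
  induction i with
  | zero => rfl
  | succ i ih =>
    have hsucc := h (i + 1) hi
    simp only [prefixArea, sum_range_succ] at hsucc
    rw [← prefixArea, ← prefixArea, h i (by omega), ih (by omega)] at hsucc
    exact_mod_cast (by linarith : (heightAt mz (i + 1) : ℚ) = heightAt mz' (i + 1))

lemma eq_of_heightAt_eq {mz mz' : List Move} {n : ℕ} (hlen : mz.length = n)
    (hlen' : mz'.length = n) (h : ∀ i ≤ n, heightAt mz i = heightAt mz' i) : mz = mz' := by
  refine List.ext_getElem (hlen.trans hlen'.symm) fun i hi hi' => Move.step_injective ?_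
  have := heightAt_succ mz hi
  have := heightAt_succ mz' hi'
  linarith [h i (by omega), h (i + 1) (by omega)]

lemma prefixArea_eq (mz : List Move) (i : ℕ) :
    prefixArea mz i =
      ((∑ j ∈ range i, heightAt mz j + ∑ j ∈ range (i + 1), heightAt mz j : ℤ) : ℚ) / 2 := by
  rw [prefixArea, ← sum_div, sum_add_distrib, sum_range_succ' (fun j => heightAt mz j) i,
    heightAt_zero]
  push_cast
  ring

lemma prefixArea_le_of_sum_range_le {mz mz' : List Move} {i : ℕ}
    (h : ∀ m ≤ i + 1, ∑ j ∈ range m, heightAt mz j ≤ ∑ j ∈ range m, heightAt mz' j) :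
    prefixArea mz i ≤ prefixArea mz' i := by
  rw [prefixArea_eq, prefixArea_eq]
  gcongr ?_ / 2
  exact_mod_cast add_le_add (h i (by omega)) (h (i + 1) le_rfl)

def ofHeights (f : ℕ → ℤ) (n : ℕ) : List Move :=
  (List.range n).map fun i => if f i < f (i + 1) then U else if f (i + 1) < f i then D else H

lemma length_ofHeights (f : ℕ → ℤ) (n : ℕ) : (ofHeights f n).length = n := by
  simp [ofHeights]

lemma heightAt_ofHeights {f : ℕ → ℤ} {n i : ℕ} (hf0 : f 0 = 0)
    (hf : ∀ j, |f (j + 1) - f j| ≤ 1) (hi : i ≤ n) : heightAt (ofHeights f n) i = f i := by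
  induction i with
  | zero => exact hf0.symm
  | succ i ih =>
    rw [heightAt_succ _ (by rw [length_ofHeights]; omega), ih (by omega)]
    have := abs_le.mp (hf i)
    simp only [ofHeights, List.getElem_map, List.getElem_range]
    split_ifs <;> simp only [Move.step] <;> omega

lemma ofHeights_mem_MZ {f : ℕ → ℤ} {n A : ℕ} (hf0 : f 0 = 0)
    (hf : ∀ j, |f (j + 1) - f j| ≤ 1) (hf_nonneg : ∀ j, 0 ≤ f j) (hfn : f n = 0)
    (hsum : ∑ j ∈ range (n + 1), f j = A) :
    ofHeights f n ∈ MZ n A := by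
  have hlen := length_ofHeights f n
  have hheight : ∀ i ≤ n, heightAt (ofHeights f n) i = f i := fun i hi =>
    heightAt_ofHeights hf0 hf hi
  refine ⟨hlen, ⟨fun i => ?_, by rw [hlen, hheight n le_rfl, hfn]⟩, ?_⟩
  · rcases le_or_gt i n with hi | hi
    · exact hheight i hi ▸ hf_nonneg i
    · rw [heightAt_of_length_le _ (by omega), hlen, hheight n le_rfl, hfn]
  · rw [area, hlen, ← hsum]
    exact sum_congr rfl fun i hi => hheight i (Nat.lt_succ_iff.mp (mem_range.mp hi))

lemma sub_one_sq_div_four_add_div_two (w : ℕ) : (w - 1) ^ 2 / 4 + w / 2 = w ^ 2 / 4 := by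
  obtain _ | v := w
  · rfl
  rw [Nat.add_sub_cancel]
  rcases Nat.even_or_odd' v with ⟨r, rfl | rfl⟩ <;> ring_nf <;> omega

lemma exists_eq_sub_one_sq_div_four_add {n A : ℕ} (hA : A ≤ n ^ 2 / 4) :
    ∃ w t, w ≤ n ∧ t ≤ w / 2 ∧ A = (w - 1) ^ 2 / 4 + t := by
  induction n with
  | zero => exact ⟨0, 0, le_rfl, le_rfl, by simpa using hA⟩
  | succ n ih =>
    by_cases h : A ≤ n ^ 2 / 4
    · obtain ⟨w, t, hw, ht, hAwt⟩ := ih h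
      exact ⟨w, t, by omega, ht, hAwt⟩
    · have := sub_one_sq_div_four_add_div_two (n + 1)
      rw [Nat.add_sub_cancel] at this
      exact ⟨n + 1, A - n ^ 2 / 4, le_rfl, by omega, by rw [Nat.add_sub_cancel]; omega⟩

/-- The tent of width `w - 1` with its last `t` descending positions raised by one; truncated
subtraction makes it vanish from `w` on. -/
def canonicHeight (w t j : ℕ) : ℕ :=
  min (min j (w - j)) (max t (w - 1 - j))

section CanonicHeight

variable {w t : ℕ}

lemma canonicHeight_zero : canonicHeight w t 0 = 0 := by
  simp [canonicHeight]

lemma canonicHeight_of_le {j : ℕ} (hj : w ≤ j) : canonicHeight w t j = 0 := by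
  simp [canonicHeight, Nat.sub_eq_zero_of_le hj]

lemma abs_canonicHeight_succ_sub_le_one (j : ℕ) :
    |(canonicHeight w t (j + 1) : ℤ) - canonicHeight w t j| ≤ 1 := by
  rw [abs_le, canonicHeight, canonicHeight]
  omega

lemma min_le_canonicHeight (j : ℕ) : min (j : ℤ) (w - 1 - j) ≤ canonicHeight w t j := by
  rw [canonicHeight]
  omega

lemma canonicHeight_le (j : ℕ) : (canonicHeight w t j : ℤ) ≤ max 0 ((w : ℤ) - j) := by
  rw [canonicHeight]
  omega

lemma canonicHeight_succ_right (ht : 2 * (t + 1) ≤ w) (j : ℕ) :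
    canonicHeight w (t + 1) j = canonicHeight w t j + if j = w - 1 - t then 1 else 0 := by
  rw [canonicHeight, canonicHeight]
  split_ifs <;> omega

lemma canonicHeight_div_two (j : ℕ) : canonicHeight w (w / 2) j = canonicHeight (w + 1) 0 j := by
  rw [canonicHeight, canonicHeight]
  omega

lemma sum_range_canonicHeight_eq_add {N : ℕ} (hN : w ≤ N) (ht : t ≤ w / 2) :
    ∑ j ∈ range N, canonicHeight w t j = ∑ j ∈ range N, canonicHeight w 0 j + t := by
  induction t with
  | zero => rfl
  | succ t ih =>
    simp_rw [canonicHeight_succ_right (by omega : 2 * (t + 1) ≤ w), sum_add_distrib,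
      sum_ite_eq', mem_range, if_pos (by omega : w - 1 - t < N), ih (by omega), add_assoc]

lemma sum_range_canonicHeight_zero {N : ℕ} (hN : w ≤ N) :
    ∑ j ∈ range N, canonicHeight w 0 j = (w - 1) ^ 2 / 4 := by
  induction w with
  | zero => simp [canonicHeight_of_le]
  | succ w ih =>
    simp_rw [← canonicHeight_div_two]
    rw [sum_range_canonicHeight_eq_add (by omega) le_rfl, ih (by omega),
      sub_one_sq_div_four_add_div_two, Nat.add_sub_cancel]

lemma sum_range_canonicHeight {N : ℕ} (hN : w ≤ N) (ht : t ≤ w / 2) :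
    ∑ j ∈ range N, canonicHeight w t j = (w - 1) ^ 2 / 4 + t := by
  rw [sum_range_canonicHeight_eq_add hN ht, sum_range_canonicHeight_zero hN]

end CanonicHeight

def canonicPath (n w t : ℕ) : List Move :=
  ofHeights (fun j => canonicHeight w t j) n

section CanonicPath

variable {n w t : ℕ}

lemma heightAt_canonicPath {i : ℕ} (hi : i ≤ n) :
    heightAt (canonicPath n w t) i = canonicHeight w t i :=
  heightAt_ofHeights (f := fun j => canonicHeight w t j)
    (by rw [canonicHeight_zero, Nat.cast_zero]) abs_canonicHeight_succ_sub_le_one hi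

lemma canonicPath_mem_MZ (hw : w ≤ n) (ht : t ≤ w / 2) :
    canonicPath n w t ∈ MZ n ((w - 1) ^ 2 / 4 + t) :=
  ofHeights_mem_MZ (by simp [canonicHeight_zero]) abs_canonicHeight_succ_sub_le_one
    (fun _ => Nat.cast_nonneg _) (by simp [canonicHeight_of_le hw])
    (by rw [← sum_range_canonicHeight (N := n + 1) (by omega) ht]; push_cast; rfl)

lemma prefixArea_le_prefixArea_canonicPath (hw : w ≤ n) (ht : t ≤ w / 2) {mz : List Move}
    (hmz : mz ∈ MZ n ((w - 1) ^ 2 / 4 + t)) {i : ℕ} (hi : i ≤ n) :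
    prefixArea mz i ≤ prefixArea (canonicPath n w t) i := by
  obtain ⟨hlen, ⟨hmz_nonneg, hmz_end⟩, hmz_area⟩ := hmz
  refine prefixArea_le_of_sum_range_le fun m hm => ?_
  rw [sum_congr rfl fun j hj => heightAt_canonicPath (by rw [mem_range] at hj; omega)]
  refine sum_range_le_of_tent_bounds (w := w) (heightAt_zero mz) (abs_heightAt_succ_sub_le_one mz)
    hmz_nonneg (hlen ▸ hmz_end) min_le_canonicHeight canonicHeight_le ?_ (by omega)
  rw [show ∑ j ∈ range (n + 1), heightAt mz j = area mz by rw [area, hlen], hmz_area,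
    ← sum_range_canonicHeight (N := n + 1) (by omega) ht]
  push_cast
  rfl

end CanonicPath

/-- for every `n` and every `A ≤ ⌊n²/4⌋`, there is exactly one Motzkin path
of width `n` and area `A` all of whose prefix areas are maximal among paths in `MZ(n,A)`
(the canonic path); in particular `MZ(n,A)` is nonempty. -/
theorem canonic_path_exists_unique (n A : ℕ) (hA : A ≤ n ^ 2 / 4) :
    (∃! mz : List Move, mz ∈ MZ n A ∧
      ∀ i ≤ n, ∀ mz' ∈ MZ n A, prefixArea mz' i ≤ prefixArea mz i) ∧
    (MZ n A).Nonempty := by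
  obtain ⟨w, t, hw, ht, rfl⟩ := exists_eq_sub_one_sq_div_four_add hA
  have hC := canonicPath_mem_MZ hw ht
  have hmax : ∀ i ≤ n, ∀ mz ∈ MZ n ((w - 1) ^ 2 / 4 + t),
      prefixArea mz i ≤ prefixArea (canonicPath n w t) i := fun i hi mz hmz =>
    prefixArea_le_prefixArea_canonicPath hw ht hmz hi
  refine ⟨⟨canonicPath n w t, ⟨hC, hmax⟩, fun mz ⟨hmz, hmz_max⟩ => ?_⟩, _, hC⟩
  exact eq_of_heightAt_eq hmz.1 hC.1 <| heightAt_eq_of_prefixArea_eq fun i hi =>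
    le_antisymm (hmax i hi mz hmz) (hmz_max i hi _ hC)
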